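/- For n ≥ 4, every x ∈ F₂ⁿ that is not the zero sequence, not the all-ones sequence, not (1,0,…,0), and not (0,…,0,1), satisfies |T(x)| > n. -/

import Mathlib

/-- The derivative of a binary sequence: `(∂x)ᵢ = xᵢ + xᵢ₊₁`. -/
def der {n : ℕ} (x : Fin n → ZMod 2) : Fin (n - 1) → ZMod 2 :=
  fun i => x ⟨i.1, by have := i.2; omega⟩ + x ⟨i.1 + 1, by have := i.2; omega⟩

/-- The iterated derivative `∂ʲx : F₂^{n-j}`. -/
def derIter {n : ℕ} (x : Fin n → ZMod 2) : (j : ℕ) → Fin (n - j) → ZMod 2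
  | 0 => x
  | j + 1 => der (derIter x j)

/-- The weight (number of ones) of a binary sequence. -/
def wt {m : ℕ} (y : Fin m → ZMod 2) : ℕ :=
  (Finset.univ.filter fun i => y i = 1).card

/-- The weight of the Steinhaus triangle of `x`: the sum of the weights of all rows. -/
def tw {n : ℕ} (x : Fin n → ZMod 2) : ℕ :=
  ∑ j ∈ Finset.range n, wt (derIter x j)

/-- The standard basis vector `e k` with a single one in position `k`. -/
def e (n k : ℕ) : Fin n → ZMod 2 := fun i => if i.1 = k then 1 else 0

/-!
Deleting the top row gives `|T(x)| = |x| + |T(∂x)|`. By induction this yields `|T(x)| ≥ n` for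
every nonzero `x`, since `∂x = 0` forces `x = 1⋯1`. For `x` neither `0` nor `1⋯1`, `∂x ≠ 0`, so
`|T(x)| ≥ |x| + n - 1` and only `|x| = 1`, i.e. `x = eₖ`, is left. For `0 < k < n - 1` the second
row `∂eₖ` has two ones, and when `n ≥ 4` the third row `xⱼ + xⱼ₊₂` is still nonzero, so
`|T(eₖ)| ≥ 1 + 2 + (n - 2)`.
-/

lemma zmod_two_eq_zero_or_one (a : ZMod 2) : a = 0 ∨ a = 1 := by
  revert a; decide

lemma der_apply {n : ℕ} (x : Fin n → ZMod 2) (i : ℕ) (hi : i < n - 1) :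
    der x ⟨i, hi⟩ = x ⟨i, by omega⟩ + x ⟨i + 1, by omega⟩ := rfl

lemma der_der_apply {n : ℕ} (x : Fin n → ZMod 2) (i : ℕ) (hi : i < n - 1 - 1) :
    der (der x) ⟨i, hi⟩ = x ⟨i, by omega⟩ + x ⟨i + 2, by omega⟩ := by
  rw [der_apply, der_apply, der_apply, add_assoc, CharTwo.add_cancel_left]

lemma derIter_succ {n : ℕ} (x : Fin n → ZMod 2) (j : ℕ) :
    derIter x (j + 1) = derIter (der x) j ∘ Fin.cast (by omega) := by
  induction j with
  | zero => rfl
  | succ j ih =>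
    funext ⟨i, hi⟩
    show der (derIter x (j + 1)) ⟨i, hi⟩ = der (derIter (der x) j) _
    simp only [der, ih, Function.comp_apply, Fin.cast_mk]

lemma wt_comp_cast {m m' : ℕ} (h : m = m') (y : Fin m' → ZMod 2) :
    wt (y ∘ Fin.cast h) = wt y := by
  subst h
  rfl

lemma tw_eq_wt_add_tw_der {n : ℕ} (hn : 1 ≤ n) (x : Fin n → ZMod 2) :
    tw x = wt x + tw (der x) := by
  obtain ⟨m, rfl⟩ : ∃ m, n = m + 1 := ⟨n - 1, by omega⟩
  rw [tw, Finset.sum_range_succ', add_comm]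
  congr 1
  refine Finset.sum_congr rfl fun j _ => ?_
  rw [derIter_succ, wt_comp_cast]

lemma eq_of_der_eq_zero {n : ℕ} {x : Fin n → ZMod 2} (hx : der x = 0) (i j : Fin n) :
    x i = x j := by
  suffices h : ∀ i : Fin n, x i = x ⟨0, i.pos⟩ by rw [h i, h j]
  rintro ⟨i, hi⟩
  induction i with
  | zero => rfl
  | succ i ih =>
    have h := congrFun hx ⟨i, by omega⟩
    rw [der_apply, Pi.zero_apply, CharTwo.add_eq_zero] at h
    rw [← h, ih]

lemma der_ne_zero {n : ℕ} {x : Fin n → ZMod 2} (hx0 : x ≠ 0) (hx1 : x ≠ fun _ => 1) :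
    der x ≠ 0 := by
  intro hx
  obtain ⟨i, hi⟩ := Function.ne_iff.mp hx0
  rcases zmod_two_eq_zero_or_one (x i) with hi' | hi'
  · exact hi hi'
  · exact hx1 (funext fun j => (eq_of_der_eq_zero hx j i).trans hi')

lemma one_le_wt {m : ℕ} {x : Fin m → ZMod 2} (hx : x ≠ 0) : 1 ≤ wt x := by
  obtain ⟨i, hi⟩ := Function.ne_iff.mp hx
  refine Finset.card_pos.mpr ⟨i, Finset.mem_filter.mpr ⟨Finset.mem_univ _, ?_⟩⟩
  exact (zmod_two_eq_zero_or_one (x i)).resolve_left hi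

lemma two_le_wt {m : ℕ} {x : Fin m → ZMod 2} {i j : Fin m} (hij : i ≠ j)
    (hi : x i = 1) (hj : x j = 1) : 2 ≤ wt x := by
  rw [← Finset.card_pair hij]
  refine Finset.card_le_card fun k hk => ?_
  rcases Finset.mem_insert.mp hk with rfl | hk
  · simpa using hi
  · rw [Finset.mem_singleton.mp hk]; simpa using hj

lemma wt_const_one (m : ℕ) : wt (fun _ : Fin m => (1 : ZMod 2)) = m := by
  simp [wt]

lemma wt_e {n k : ℕ} (hk : k < n) : wt (e n k) = 1 := by
  rw [wt, Finset.card_eq_one]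
  refine ⟨⟨k, hk⟩, ?_⟩
  ext i
  simp [e, Fin.ext_iff]

lemma le_tw_of_ne_zero {n : ℕ} {x : Fin n → ZMod 2} (hx : x ≠ 0) : n ≤ tw x := by
  induction n with
  | zero => exact Nat.zero_le _
  | succ n ih =>
    rw [tw_eq_wt_add_tw_der (by omega)]
    by_cases hone : x = fun _ => 1
    · rw [hone, wt_const_one]
      omega
    · have hwt := one_le_wt hx
      have hder := ih (der_ne_zero hx hone)
      omega

lemma exists_eq_e_of_wt_eq_one {n : ℕ} {x : Fin n → ZMod 2} (hx : wt x = 1) :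
    ∃ k : Fin n, x = e n k := by
  obtain ⟨k, hk⟩ := Finset.card_eq_one.mp hx
  refine ⟨k, funext fun i => ?_⟩
  have hi := Finset.ext_iff.mp hk i
  simp only [Finset.mem_filter, Finset.mem_univ, true_and, Finset.mem_singleton] at hi
  by_cases hik : i = k
  · subst hik
    simp [e, hi.mpr rfl]
  · rw [e, if_neg (Fin.val_ne_of_ne hik)]
    exact (zmod_two_eq_zero_or_one (x i)).resolve_right (mt hi.mp hik)

lemma lt_tw_e {n k : ℕ} (hn : 4 ≤ n) (hk0 : k ≠ 0) (hkn : k + 1 < n) : n < tw (e n k) := by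
  have hwt : 2 ≤ wt (der (e n k)) := by
    refine two_le_wt (i := ⟨k - 1, by omega⟩) (j := ⟨k, by omega⟩) (by simp; omega) ?_ ?_
    · rw [der_apply]; simp [e, show k - 1 + 1 = k by omega, show k - 1 ≠ k by omega]
    · rw [der_apply]; simp [e]
  have hder2 : der (der (e n k)) ≠ 0 := by
    rw [Function.ne_iff]
    by_cases hk : k + 2 < n
    · exact ⟨⟨k, by omega⟩, by rw [der_der_apply]; simp [e]⟩
    · exact ⟨⟨k - 2, by omega⟩, by
        rw [der_der_apply]; simp [e, show k - 2 + 2 = k by omega, show k - 2 ≠ k by omega]⟩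
  have hrows := le_tw_of_ne_zero hder2
  rw [tw_eq_wt_add_tw_der (by omega), wt_e (by omega), tw_eq_wt_add_tw_der (by omega)]
  omega

theorem stmt8 (n : ℕ) (hn : 4 ≤ n) (x : Fin n → ZMod 2)
    (h0 : x ≠ 0) (h1 : x ≠ fun _ => 1) (h2 : x ≠ e n 0) (h3 : x ≠ e n (n - 1)) :
    n < tw x := by
  by_cases hwt : wt x = 1
  · obtain ⟨k, rfl⟩ := exists_eq_e_of_wt_eq_one hwt
    have hk0 : k.1 ≠ 0 := fun h => h2 (by rw [h])
    have hkn : k.1 ≠ n - 1 := fun h => h3 (by rw [h])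
    exact lt_tw_e hn hk0 (by omega)
  · have hwt1 := one_le_wt h0
    have hder := le_tw_of_ne_zero (der_ne_zero h0 h1)
    rw [tw_eq_wt_add_tw_der (by omega)]
    omega
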